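/- arXiv:2510.12484 — 3 statements merged into one kernel-verified Lean document; each statement's English description precedes it below -/
import Mathlib

section
/- Let 1 < p < 5 and b ≥ 0. There is no function u : [0,∞) → ℝ with the following properties: u is continuously differentiable on [0,∞) and twice continuously differentiable on (0,∞); u(r) > 0 for all r ≥ 0; u(0) = 1 and u′(0) = 0; and u″(r) + (2/r)·u′(r) + u(r)^p + b·u(r)^5 = 0 for all r > 0. Equivalently, every solution of this initial value problem for the limit equation must change sign on [0,∞). -/
open Filter Set Topology

/-!
Write `f(u) = u^p + b u^5`. Since `(r² u')' = -r² f(u) ≤ 0`, the solution decreases, and comparing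
`r² u'` with `r³ u^p / 3` gives `u' ≤ -(r/3) u^p`, hence `u^(1-p) ≥ 1 + (p-1) r² / 6`: `u` decays
like `r^(-2/(p-1))`. Feeding this back into `(r² u')' = -r² f(u)` shows `|u'| ≲ r^(-1-δ)` for some
`δ > 1/2`. On the other hand the Pohozaev function
`P(r) = r³ (u'²/2 + u^(p+1)/(p+1) + b u^6/6) + r² u u' / 2`
satisfies `P' = (3/(p+1) - 1/2) r² u^(p+1) > 0`, the critical term `b u^5` cancelling out, so
`P(r) ≥ P(1) > P(0) = 0` for `r ≥ 1`. For `p < 5` the decay estimates force `P(r) → 0`.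
-/

lemma monotoneOn_Ici_of_hasDerivAt_nonneg {a : ℝ} {f f' : ℝ → ℝ} (hf : ContinuousOn f (Ici a))
    (hd : ∀ x, a < x → HasDerivAt f (f' x) x) (h : ∀ x, a < x → 0 ≤ f' x) :
    MonotoneOn f (Ici a) :=
  monotoneOn_of_hasDerivWithinAt_nonneg (convex_Ici a) hf
    (fun x hx => (hd x (by rwa [interior_Ici] at hx)).hasDerivWithinAt)
    (fun x hx => h x (by rwa [interior_Ici] at hx))

lemma antitoneOn_Ici_of_hasDerivAt_nonpos {a : ℝ} {f f' : ℝ → ℝ} (hf : ContinuousOn f (Ici a))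
    (hd : ∀ x, a < x → HasDerivAt f (f' x) x) (h : ∀ x, a < x → f' x ≤ 0) :
    AntitoneOn f (Ici a) :=
  antitoneOn_of_hasDerivWithinAt_nonpos (convex_Ici a) hf
    (fun x hx => (hd x (by rwa [interior_Ici] at hx)).hasDerivWithinAt)
    (fun x hx => h x (by rwa [interior_Ici] at hx))

lemma strictMonoOn_Ici_of_hasDerivAt_pos {a : ℝ} {f f' : ℝ → ℝ} (hf : ContinuousOn f (Ici a))
    (hd : ∀ x, a < x → HasDerivAt f (f' x) x) (h : ∀ x, a < x → 0 < f' x) :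
    StrictMonoOn f (Ici a) :=
  strictMonoOn_of_hasDerivWithinAt_pos (convex_Ici a) hf
    (fun x hx => (hd x (by rwa [interior_Ici] at hx)).hasDerivWithinAt)
    (fun x hx => h x (by rwa [interior_Ici] at hx))

lemma tendsto_pow_mul_atTop_zero_of_le_rpow {f : ℝ → ℝ} {n : ℕ} {c M : ℝ} (hc : (n : ℝ) < c)
    (hf : ∀ᶠ r in atTop, 0 ≤ f r ∧ f r ≤ M * r ^ (-c)) :
    Tendsto (fun r => r ^ n * f r) atTop (𝓝 0) := by
  have hlim : Tendsto (fun r : ℝ => M * r ^ (-(c - n))) atTop (𝓝 0) := by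
    simpa using (tendsto_rpow_neg_atTop (sub_pos.2 hc)).const_mul M
  refine tendsto_of_tendsto_of_tendsto_of_le_of_le' tendsto_const_nhds hlim ?_ ?_
  · filter_upwards [hf, eventually_gt_atTop 0] with r hr hr0
    exact mul_nonneg (by positivity) hr.1
  · filter_upwards [hf, eventually_gt_atTop 0] with r hr hr0
    calc r ^ n * f r ≤ r ^ n * (M * r ^ (-c)) := mul_le_mul_of_nonneg_left hr.2 (by positivity)
      _ = M * r ^ (-(c - n)) := by
        rw [← Real.rpow_natCast, mul_left_comm, ← Real.rpow_add hr0]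
        ring_nf

structure RadialSolution (p b : ℝ) where
  u : ℝ → ℝ
  du : ℝ → ℝ
  continuousOn_u : ContinuousOn u (Ici 0)
  continuousOn_du : ContinuousOn du (Ici 0)
  hasDerivAt_u : ∀ r, 0 < r → HasDerivAt u (du r) r
  hasDerivAt_du : ∀ r, 0 < r → HasDerivAt du (-(2 / r * du r + u r ^ p + b * u r ^ 5)) r
  pos : ∀ r, 0 ≤ r → 0 < u r
  u_zero : u 0 = 1
  du_zero : du 0 = 0

namespace RadialSolution

variable {p b : ℝ} (s : RadialSolution p b)

lemma continuousOn_u_rpow (e : ℝ) : ContinuousOn (fun x => s.u x ^ e) (Ici 0) :=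
  s.continuousOn_u.rpow_const fun x hx => Or.inl (s.pos x hx).ne'

lemma hasDerivAt_u_rpow (e : ℝ) {r : ℝ} (hr : 0 < r) :
    HasDerivAt (fun x => s.u x ^ e) (s.du r * e * s.u r ^ (e - 1)) r :=
  (s.hasDerivAt_u r hr).rpow_const (Or.inl (s.pos r hr.le).ne')

lemma continuousOn_sq_mul_du : ContinuousOn (fun x => x ^ 2 * s.du x) (Ici 0) :=
  (continuous_pow 2).continuousOn.mul s.continuousOn_du

lemma hasDerivAt_sq_mul_du {r : ℝ} (hr : 0 < r) :
    HasDerivAt (fun x => x ^ 2 * s.du x) (-(r ^ 2 * (s.u r ^ p + b * s.u r ^ 5))) r := by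
  refine ((hasDerivAt_pow 2 r).mul (s.hasDerivAt_du r hr)).congr_deriv ?_
  norm_num
  field_simp
  ring

lemma du_nonpos (hb : 0 ≤ b) {r : ℝ} (hr : 0 < r) : s.du r ≤ 0 := by
  have hanti : AntitoneOn (fun x => x ^ 2 * s.du x) (Ici 0) := by
    refine antitoneOn_Ici_of_hasDerivAt_nonpos s.continuousOn_sq_mul_du
      (fun x hx => s.hasDerivAt_sq_mul_du hx) fun x hx => ?_
    have := s.pos x hx.le
    exact neg_nonpos.2 (by positivity)
  have h := hanti self_mem_Ici hr.le hr.le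
  simp only [s.du_zero, mul_zero] at h
  exact nonpos_of_mul_nonpos_right h (by positivity)

lemma antitoneOn_u (hb : 0 ≤ b) : AntitoneOn s.u (Ici 0) :=
  antitoneOn_Ici_of_hasDerivAt_nonpos s.continuousOn_u s.hasDerivAt_u fun _ hx => s.du_nonpos hb hx

lemma u_le_one (hb : 0 ≤ b) {r : ℝ} (hr : 0 ≤ r) : s.u r ≤ 1 :=
  s.u_zero ▸ s.antitoneOn_u hb self_mem_Ici hr hr

lemma u_pow_le_rpow (hb : 0 ≤ b) {n : ℕ} {e : ℝ} (he : e ≤ n) {r : ℝ} (hr : 0 ≤ r) :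
    s.u r ^ n ≤ s.u r ^ e := by
  rw [← Real.rpow_natCast]
  exact Real.rpow_le_rpow_of_exponent_ge (s.pos r hr) (s.u_le_one hb hr) he

lemma du_le_neg_mul_rpow (hp : 0 ≤ p) (hb : 0 ≤ b) {r : ℝ} (hr : 0 < r) :
    s.du r ≤ -(r / 3) * s.u r ^ p := by
  have hanti : AntitoneOn (fun x => x ^ 2 * s.du x + x ^ 3 / 3 * s.u x ^ p) (Ici 0) := by
    refine antitoneOn_Ici_of_hasDerivAt_nonpos
      (s.continuousOn_sq_mul_du.add (((continuous_pow 3).continuousOn.div_const 3).mul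
        (s.continuousOn_u_rpow p)))
      (fun x hx => (s.hasDerivAt_sq_mul_du hx).add
        (((hasDerivAt_pow 3 x).div_const 3).mul (s.hasDerivAt_u_rpow p hx))) fun x hx => ?_
    have hu := s.pos x hx.le
    have hdu := s.du_nonpos hb hx
    have h5 : 0 ≤ x ^ 2 * (b * s.u x ^ 5) := by positivity
    have hd : 0 ≤ x ^ 3 / 3 * (-s.du x * p * s.u x ^ (p - 1)) := by
      have : 0 ≤ -s.du x := by linarith
      positivity
    push_cast
    linarith
  have h := hanti self_mem_Ici hr.le hr.le
  simp only [s.du_zero, s.u_zero, Real.one_rpow] at h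
  nlinarith [pow_pos hr 2]

lemma one_add_le_rpow (hp : 1 ≤ p) (hb : 0 ≤ b) {r : ℝ} (hr : 0 ≤ r) :
    1 + (p - 1) / 6 * r ^ 2 ≤ s.u r ^ (1 - p) := by
  have hmono : MonotoneOn (fun x => s.u x ^ (1 - p) - (p - 1) / 6 * x ^ 2) (Ici 0) := by
    refine monotoneOn_Ici_of_hasDerivAt_nonneg
      ((s.continuousOn_u_rpow _).sub (continuous_const.mul (continuous_pow 2)).continuousOn)
      (fun x hx => (s.hasDerivAt_u_rpow _ hx).sub ((hasDerivAt_pow 2 x).const_mul _))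
      fun x hx => ?_
    have hv : 0 < s.u x ^ p := Real.rpow_pos_of_pos (s.pos x hx.le) p
    have hquot : x / 3 ≤ -s.du x / s.u x ^ p := by
      rw [le_div_iff₀ hv]
      linarith [s.du_le_neg_mul_rpow (by linarith) hb hx]
    have hmul : 0 ≤ (p - 1) * (-s.du x / s.u x ^ p - x / 3) :=
      mul_nonneg (by linarith) (by linarith)
    rw [show 1 - p - 1 = -p by ring, Real.rpow_neg (s.pos x hx.le).le]
    norm_num
    linear_combination hmul
  have h := hmono self_mem_Ici hr hr
  simp only [s.u_zero, Real.one_rpow] at h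
  linarith

lemma u_rpow_le (hp : 1 < p) (hb : 0 ≤ b) {e : ℝ} (he : 0 ≤ e) {r : ℝ} (hr : 0 < r) :
    s.u r ^ e ≤ (6 / (p - 1)) ^ (e / (p - 1)) * r ^ (-(2 * e / (p - 1))) := by
  have hu := s.pos r hr.le
  have hp' : 0 < p - 1 := by linarith
  have hdecay : s.u r ^ (p - 1) ≤ 6 / (p - 1) * r ^ (-2 : ℝ) := by
    have hgrow := s.one_add_le_rpow hp.le hb hr.le
    have hinv : s.u r ^ (p - 1) = (s.u r ^ (1 - p))⁻¹ := by rw [← Real.rpow_neg hu.le, neg_sub]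
    rw [hinv, Real.rpow_neg hr.le, Real.rpow_two]
    calc (s.u r ^ (1 - p))⁻¹ ≤ ((p - 1) / 6 * r ^ 2)⁻¹ := inv_anti₀ (by positivity) (by linarith)
      _ = 6 / (p - 1) * (r ^ 2)⁻¹ := by field_simp
  calc s.u r ^ e = (s.u r ^ (p - 1)) ^ (e / (p - 1)) := by
        rw [← Real.rpow_mul hu.le]
        field_simp
    _ ≤ (6 / (p - 1) * r ^ (-2 : ℝ)) ^ (e / (p - 1)) :=
        Real.rpow_le_rpow (by positivity) hdecay (by positivity)
    _ = (6 / (p - 1)) ^ (e / (p - 1)) * r ^ (-(2 * e / (p - 1))) := by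
        rw [Real.mul_rpow (by positivity) (by positivity), ← Real.rpow_mul hr.le]
        ring_nf

lemma nonlinearity_le (hp : 1 < p) (hp5 : p ≤ 5) (hb : 0 ≤ b) {δ : ℝ}
    (hδ : 2 + δ ≤ 2 * p / (p - 1)) {r : ℝ} (hr : 1 ≤ r) :
    s.u r ^ p + b * s.u r ^ 5 ≤ (1 + b) * (6 / (p - 1)) ^ (p / (p - 1)) * r ^ (-(2 + δ)) := by
  have h5 : b * s.u r ^ 5 ≤ b * s.u r ^ p :=
    mul_le_mul_of_nonneg_left (s.u_pow_le_rpow hb (by exact_mod_cast hp5) (by linarith)) hb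
  have hup : s.u r ^ p ≤ (6 / (p - 1)) ^ (p / (p - 1)) * r ^ (-(2 + δ)) :=
    (s.u_rpow_le hp hb (by linarith) (by linarith)).trans <|
      mul_le_mul_of_nonneg_left (Real.rpow_le_rpow_of_exponent_le hr (by linarith))
        (by positivity)
  nlinarith

lemma exists_neg_du_le {δ K : ℝ} (hδ : δ < 1) (hK : 0 ≤ K)
    (hf : ∀ r, 1 ≤ r → s.u r ^ p + b * s.u r ^ 5 ≤ K * r ^ (-(2 + δ))) :
    ∃ M, ∀ r, 1 ≤ r → -s.du r ≤ M * r ^ (-(1 + δ)) := by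
  set B := K / (1 - δ)
  have hB : 0 ≤ B := div_nonneg hK (by linarith)
  have hmono : MonotoneOn (fun x => x ^ 2 * s.du x + B * x ^ (1 - δ)) (Ici 1) := by
    refine monotoneOn_Ici_of_hasDerivAt_nonneg
      ((s.continuousOn_sq_mul_du.mono (Ici_subset_Ici.2 zero_le_one)).add
        (continuous_const.mul (Real.continuous_rpow_const (by linarith))).continuousOn)
      (fun x hx => (s.hasDerivAt_sq_mul_du (by linarith)).add
        ((Real.hasDerivAt_rpow_const (Or.inl (by linarith))).const_mul B)) fun x hx => ?_
    have hx0 : 0 < x := by linarith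
    have hsq : x ^ 2 * (s.u x ^ p + b * s.u x ^ 5) ≤ x ^ 2 * (K * x ^ (-(2 + δ))) :=
      mul_le_mul_of_nonneg_left (hf x hx.le) (by positivity)
    have heq : x ^ 2 * (K * x ^ (-(2 + δ))) = B * ((1 - δ) * x ^ (1 - δ - 1)) := by
      rw [← Real.rpow_natCast, mul_left_comm, ← Real.rpow_add hx0, ← mul_assoc,
        div_mul_cancel₀ K (by linarith : 1 - δ ≠ 0)]
      ring_nf
    linarith
  refine ⟨|s.du 1| + B, fun r hr => ?_⟩
  have hr0 : 0 < r := by linarith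
  have h := hmono self_mem_Ici hr hr
  simp only [one_pow, one_mul, Real.one_rpow, mul_one] at h
  have hX : 1 ≤ r ^ (1 - δ) := Real.one_le_rpow hr (by linarith)
  rw [show -(1 + δ) = (1 - δ) - 2 by ring, Real.rpow_sub hr0, Real.rpow_two, mul_div_assoc',
    le_div_iff₀ (by positivity)]
  nlinarith [neg_abs_le (s.du 1), abs_nonneg (s.du 1)]

lemma tendsto_pow_three_mul_du_sq (hp : 1 < p) (hp5 : p < 5) (hb : 0 ≤ b) :
    Tendsto (fun r => r ^ 3 * s.du r ^ 2) atTop (𝓝 0) := by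
  have hp' : 0 < p - 1 := by linarith
  -- any `δ ∈ (1/2, 1)` with `δ ≤ 2/(p-1)` works; `p < 5` makes this range nonempty
  set δ := min (2 / (p - 1)) (3 / 4)
  have hδ : 1 / 2 < δ := lt_min (by rw [lt_div_iff₀ hp']; linarith) (by norm_num)
  have hδp : 2 + δ ≤ 2 * p / (p - 1) := by
    have : 2 * p / (p - 1) = 2 + 2 / (p - 1) := by field_simp; ring
    linarith [min_le_left (2 / (p - 1)) (3 / 4)]
  obtain ⟨M, hM⟩ := s.exists_neg_du_le (by linarith [min_le_right (2 / (p - 1)) (3 / 4)])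
    (by positivity) fun r hr => s.nonlinearity_le hp hp5.le hb hδp hr
  refine tendsto_pow_mul_atTop_zero_of_le_rpow (c := 2 * (1 + δ)) (M := M ^ 2)
    (by push_cast; linarith) ?_
  filter_upwards [eventually_ge_atTop 1] with r hr
  refine ⟨sq_nonneg _, ?_⟩
  have hdu := s.du_nonpos hb (by linarith : 0 < r)
  calc s.du r ^ 2 = (-s.du r) ^ 2 := by ring
    _ ≤ (M * r ^ (-(1 + δ))) ^ 2 := pow_le_pow_left₀ (by linarith) (hM r hr) 2
    _ = M ^ 2 * r ^ (-(2 * (1 + δ))) := by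
        rw [mul_pow, ← Real.rpow_natCast (r ^ _), ← Real.rpow_mul (by linarith)]
        ring_nf

lemma tendsto_pow_three_mul_u_rpow (hp : 1 < p) (hp5 : p < 5) (hb : 0 ≤ b) :
    Tendsto (fun r => r ^ 3 * s.u r ^ (p + 1)) atTop (𝓝 0) := by
  refine tendsto_pow_mul_atTop_zero_of_le_rpow (c := 2 * (p + 1) / (p - 1))
    (M := (6 / (p - 1)) ^ ((p + 1) / (p - 1)))
    (by rw [lt_div_iff₀ (by linarith)]; push_cast; linarith) ?_
  filter_upwards [eventually_gt_atTop 0] with r hr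
  exact ⟨(Real.rpow_pos_of_pos (s.pos r hr.le) _).le, s.u_rpow_le hp hb (by linarith) hr⟩

noncomputable def pohozaev (r : ℝ) : ℝ :=
  r ^ 3 * (s.du r ^ 2 / 2 + s.u r ^ (p + 1) / (p + 1) + b * s.u r ^ 6 / 6)
    + r ^ 2 * s.u r * s.du r / 2

lemma hasDerivAt_pohozaev (hp : p + 1 ≠ 0) {r : ℝ} (hr : 0 < r) :
    HasDerivAt s.pohozaev ((3 / (p + 1) - 1 / 2) * (r ^ 2 * s.u r ^ (p + 1))) r := by
  have hu := s.hasDerivAt_u r hr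
  have hdu := s.hasDerivAt_du r hr
  have hE := (((hdu.pow 2).div_const 2).add
    ((s.hasDerivAt_u_rpow (p + 1) hr).div_const (p + 1))).add (((hu.pow 6).const_mul b).div_const 6)
  refine (((hasDerivAt_pow 3 r).mul hE).add
    ((((hasDerivAt_pow 2 r).mul hu).mul hdu).div_const 2)).congr_deriv ?_
  simp only [Pi.add_apply, Pi.mul_apply, Pi.pow_apply]
  rw [show p + 1 - 1 = p by ring, Real.rpow_add (s.pos r hr.le), Real.rpow_one]
  field_simp
  ring

lemma strictMonoOn_pohozaev (hp : -1 < p) (hp5 : p < 5) : StrictMonoOn s.pohozaev (Ici 0) := by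
  have := s.continuousOn_u
  have := s.continuousOn_du
  have := s.continuousOn_u_rpow (p + 1)
  refine strictMonoOn_Ici_of_hasDerivAt_pos (by unfold pohozaev; fun_prop)
    (fun x hx => s.hasDerivAt_pohozaev (by linarith) hx) fun x hx => ?_
  have hc : 1 / 2 < 3 / (p + 1) := by rw [lt_div_iff₀ (by linarith)]; linarith
  have := Real.rpow_pos_of_pos (s.pos x hx.le) (p + 1)
  have : 0 < 3 / (p + 1) - 1 / 2 := by linarith
  positivity

lemma pohozaev_le (hp : -1 < p) (hp5 : p ≤ 5) (hb : 0 ≤ b) {r : ℝ} (hr : 0 < r) :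
    s.pohozaev r ≤ r ^ 3 * s.du r ^ 2 / 2 + (1 / (p + 1) + b / 6) * (r ^ 3 * s.u r ^ (p + 1)) := by
  have hu := s.pos r hr.le
  have hcross : r ^ 2 * s.u r * s.du r ≤ 0 :=
    mul_nonpos_of_nonneg_of_nonpos (by positivity) (s.du_nonpos hb hr)
  have h6 : b * (r ^ 3 * s.u r ^ 6) ≤ b * (r ^ 3 * s.u r ^ (p + 1)) :=
    mul_le_mul_of_nonneg_left (mul_le_mul_of_nonneg_left
      (s.u_pow_le_rpow hb (by push_cast; linarith) hr.le) (by positivity)) hb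
  have hp1 : 0 < p + 1 := by linarith
  unfold pohozaev
  have : r ^ 3 * (s.u r ^ (p + 1) / (p + 1)) = 1 / (p + 1) * (r ^ 3 * s.u r ^ (p + 1)) := by
    field_simp
  nlinarith

theorem isEmpty (hp : 1 < p) (hp5 : p < 5) (hb : 0 ≤ b) : IsEmpty (RadialSolution p b) := by
  refine ⟨fun s => ?_⟩
  have hmono := s.strictMonoOn_pohozaev (by linarith) hp5
  have hP1 : 0 < s.pohozaev 1 := by
    simpa [pohozaev] using hmono self_mem_Ici (mem_Ici.2 zero_le_one) one_pos
  have hbound : Tendsto (fun r => r ^ 3 * s.du r ^ 2 / 2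
      + (1 / (p + 1) + b / 6) * (r ^ 3 * s.u r ^ (p + 1))) atTop (𝓝 0) := by
    simpa using ((s.tendsto_pow_three_mul_du_sq hp hp5 hb).div_const 2).add
      ((s.tendsto_pow_three_mul_u_rpow hp hp5 hb).const_mul (1 / (p + 1) + b / 6))
  obtain ⟨r, hr, hr1⟩ := ((hbound.eventually_lt_const hP1).and (eventually_ge_atTop 1)).exists
  have hPr := hmono.monotoneOn (mem_Ici.2 zero_le_one) (mem_Ici.2 (by linarith)) hr1
  linarith [s.pohozaev_le (by linarith) hp5.le hb (by linarith : 0 < r)]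

noncomputable def ofContDiffOn {u : ℝ → ℝ} (hC1 : ContDiffOn ℝ 1 u (Ici 0))
    (hC2 : ContDiffOn ℝ 2 u (Ioi 0)) (hpos : ∀ r, 0 ≤ r → 0 < u r) (hu0 : u 0 = 1)
    (hd0 : HasDerivWithinAt u 0 (Ici 0) 0)
    (hode : ∀ r, 0 < r → deriv (deriv u) r + (2 / r) * deriv u r + u r ^ p + b * u r ^ 5 = 0) :
    RadialSolution p b where
  u := u
  du := derivWithin u (Ici 0)
  continuousOn_u := hC1.continuousOn
  continuousOn_du := hC1.continuousOn_derivWithin (uniqueDiffOn_Ici 0) le_rfl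
  hasDerivAt_u r hr := by
    rw [derivWithin_of_mem_nhds (Ici_mem_nhds hr)]
    exact ((hC2.differentiableOn (by norm_num) r hr).differentiableAt (Ioi_mem_nhds hr)).hasDerivAt
  hasDerivAt_du r hr := by
    have hd : DifferentiableAt ℝ (deriv u) r :=
      ((hC2.deriv_of_isOpen (m := 1) isOpen_Ioi (by norm_num)).differentiableOn (by norm_num) r
        hr).differentiableAt (Ioi_mem_nhds hr)
    have heq : derivWithin u (Ici 0) =ᶠ[𝓝 r] deriv u := by
      filter_upwards [Ioi_mem_nhds hr] with x hx using derivWithin_of_mem_nhds (Ici_mem_nhds hx)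
    rw [derivWithin_of_mem_nhds (Ici_mem_nhds hr)]
    exact (hd.hasDerivAt.congr_of_eventuallyEq heq).congr_deriv (by linarith [hode r hr])
  pos := hpos
  u_zero := hu0
  du_zero := hd0.derivWithin (uniqueDiffOn_Ici 0 0 self_mem_Ici)

end RadialSolution

/-- For `1 < p < 5` and `b ≥ 0`, there is no everywhere positive solution of the radial
limit profile equation `u'' + (2/r) u' + u^p + b u^5 = 0` on `(0,∞)` with `u(0) = 1` and
`u'(0) = 0`, which is `C¹` on `[0,∞)` and `C²` on `(0,∞)`; i.e. every such solution must
change sign on `[0,∞)`. -/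
theorem statement11 (p b : ℝ) (hp1 : 1 < p) (hp5 : p < 5) (hb : 0 ≤ b) :
    ¬ ∃ u : ℝ → ℝ,
      ContDiffOn ℝ 1 u (Ici 0) ∧ ContDiffOn ℝ 2 u (Ioi 0) ∧
      (∀ r : ℝ, 0 ≤ r → 0 < u r) ∧ u 0 = 1 ∧ HasDerivWithinAt u 0 (Ici 0) 0 ∧
      (∀ r : ℝ, 0 < r →
        deriv (deriv u) r + (2 / r) * deriv u r + u r ^ p + b * u r ^ 5 = 0) := by
  rintro ⟨u, hC1, hC2, hpos, hu0, hd0, hode⟩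
  exact (RadialSolution.isEmpty hp1 hp5 hb).elim
    (RadialSolution.ofContDiffOn hC1 hC2 hpos hu0 hd0 hode)
end

section
/- Let α > 0 and R₀ > 0, and set Y(r) := √3 · e^{−√α·r}/r for r > 0. Let u : [R₀,∞) → ℝ be continuous on [R₀,∞), twice continuously differentiable on (R₀,∞), with u(r) > 0 for all r ≥ R₀, and suppose that −u″(r) − (2/r)·u′(r) + α·u(r) ≥ 0 for all r > R₀. Then u(r) ≥ (u(R₀)/Y(R₀))·Y(r) for all r ≥ R₀. -/
/-!
With `v r = r u r` and `β = √α` the supersolution inequality becomes `v'' ≤ β² v`. Then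
`w = v' + β v` satisfies `w' ≤ β w`, so `e^{-βr} w` is nonincreasing. If `w` were negative
somewhere, the derivative `w e^{βr}` of `v e^{βr}` would from then on stay below a negative
constant, and the positive function `v e^{βr}` would eventually become negative. Hence `w ≥ 0`,
so `v e^{βr} = √3 u / Y` is nondecreasing, which is the claimed bound.
-/

open Set Real

theorem antitoneOn_exp_neg_mul_mul_of_deriv_le {w w' : ℝ → ℝ} {s : Set ℝ} {β : ℝ}
    (hs : IsOpen s) (hs' : Convex ℝ s) (hw : ∀ x ∈ s, HasDerivAt w (w' x) x)
    (hle : ∀ x ∈ s, w' x ≤ β * w x) :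
    AntitoneOn (fun x => exp (-β * x) * w x) s := by
  have hderiv : ∀ x ∈ s, HasDerivAt (fun x => exp (-β * x) * w x)
      (exp (-β * x) * (w' x - β * w x)) x := fun x hx =>
    ((((hasDerivAt_id x).const_mul (-β)).exp).mul (hw x hx)).congr_deriv (by simp; ring)
  refine antitoneOn_of_hasDerivWithinAt_nonpos
    (f' := fun x => exp (-β * x) * (w' x - β * w x)) hs'
    (fun x hx => (hderiv x hx).continuousAt.continuousWithinAt) (fun x hx => ?_) (fun x hx => ?_)
  · rw [hs.interior_eq] at hx ⊢
    exact (hderiv x hx).hasDerivWithinAt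
  · rw [hs.interior_eq] at hx
    exact mul_nonpos_of_nonneg_of_nonpos (exp_pos _).le (by linarith [hle x hx])

theorem exists_neg_of_hasDerivAt_le_neg {g g' : ℝ → ℝ} {r c : ℝ} (hc : c < 0)
    (hg : ∀ x ∈ Ici r, HasDerivAt g (g' x) x) (hle : ∀ x ∈ Ici r, g' x ≤ c) :
    ∃ x, r ≤ x ∧ g x < 0 := by
  have hlin : AntitoneOn (fun x => g x - c * x) (Ici r) :=
    antitoneOn_of_hasDerivWithinAt_nonpos (f' := fun x => g' x - c) (convex_Ici r)
      (fun x hx => ((hg x hx).continuousAt.sub (by fun_prop)).continuousWithinAt)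
      (fun x hx => (((hg x (interior_subset hx)).sub ((hasDerivAt_id x).const_mul c)).congr_deriv
        (by simp)).hasDerivWithinAt)
      (fun x hx => sub_nonpos.2 (hle x (interior_subset hx)))
  set t := |g r| / -c + 1
  have hrt : r ≤ r + t :=
    le_add_of_nonneg_right (add_nonneg (div_nonneg (abs_nonneg _) (neg_pos.2 hc).le) zero_le_one)
  have hct : c * t = -|g r| + c := by
    simp only [t]
    field_simp [hc.ne]
  refine ⟨r + t, hrt, ?_⟩
  have := hlin self_mem_Ici hrt hrt
  linarith [le_abs_self (g r)]

theorem monotoneOn_mul_exp_of_pos_of_deriv2_le {v v' v'' : ℝ → ℝ} {a β : ℝ}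
    (hβ : 0 ≤ β) (hv : ∀ x ∈ Ioi a, HasDerivAt v (v' x) x)
    (hv' : ∀ x ∈ Ioi a, HasDerivAt v' (v'' x) x)
    (hcont : ContinuousOn v (Ici a)) (hpos : ∀ x ∈ Ioi a, 0 < v x)
    (hsuper : ∀ x ∈ Ioi a, v'' x ≤ β ^ 2 * v x) :
    MonotoneOn (fun x => v x * exp (β * x)) (Ici a) := by
  have hg : ∀ x ∈ Ioi a, HasDerivAt (fun x => v x * exp (β * x))
      ((v' x + β * v x) * exp (β * x)) x := fun x hx =>
    ((hv x hx).mul ((hasDerivAt_id x).const_mul β).exp).congr_deriv (by simp; ring)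
  suffices hw : ∀ x ∈ Ioi a, 0 ≤ v' x + β * v x by
    refine monotoneOn_of_hasDerivWithinAt_nonneg
      (f' := fun x => (v' x + β * v x) * exp (β * x)) (convex_Ici a) (hcont.mul (by fun_prop))
      (fun x hx => ?_) (fun x hx => ?_)
    · rw [interior_Ici] at hx ⊢
      exact (hg x hx).hasDerivWithinAt
    · rw [interior_Ici] at hx
      exact mul_nonneg (hw x hx) (exp_pos _).le
  by_contra! ⟨r, hr, hneg⟩
  have hanti := antitoneOn_exp_neg_mul_mul_of_deriv_le (β := β) (w := fun x => v' x + β * v x)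
    isOpen_Ioi (convex_Ioi a)
    (fun x hx => (hv' x hx).add ((hv x hx).const_mul β))
    (fun x hx => by linarith [hsuper x hx])
  have hr₀ : exp (-β * r) * (v' r + β * v r) < 0 := mul_neg_of_pos_of_neg (exp_pos _) hneg
  have hslope : ∀ x ∈ Ici r,
      (v' x + β * v x) * exp (β * x) ≤ (v' r + β * v r) * exp (β * r) := fun x hx => by
    have hexp (y : ℝ) : (v' y + β * v y) * exp (β * y)
        = exp (-β * y) * (v' y + β * v y) * exp (β * y) ^ 2 := by
      rw [neg_mul, exp_neg]; field_simp
    rw [hexp x, hexp r]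
    calc _ ≤ exp (-β * r) * (v' r + β * v r) * exp (β * x) ^ 2 :=
          mul_le_mul_of_nonneg_right (hanti hr (mem_Ioi.2 (hr.trans_le hx)) hx) (by positivity)
      _ ≤ _ := mul_le_mul_of_nonpos_left (by gcongr; exact hx) hr₀.le
  obtain ⟨x, hrx, hgx⟩ :=
    exists_neg_of_hasDerivAt_le_neg (mul_neg_of_neg_of_pos hneg (exp_pos _))
      (fun x hx => hg x (mem_Ioi.2 (hr.trans_le hx))) hslope
  exact hgx.not_ge (mul_pos (hpos x (mem_Ioi.2 (hr.trans_le hrx))) (exp_pos _)).le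

theorem hasDerivAt_deriv_deriv_of_contDiffOn {f : ℝ → ℝ} {s : Set ℝ} (hs : IsOpen s)
    (hf : ContDiffOn ℝ 2 f s) {x : ℝ} (hx : x ∈ s) :
    HasDerivAt f (deriv f x) x ∧ HasDerivAt (deriv f) (deriv (deriv f) x) x :=
  ⟨((hf.differentiableOn (by norm_num)).differentiableAt (hs.mem_nhds hx)).hasDerivAt,
    (((hf.deriv_of_isOpen hs (by norm_num) : ContDiffOn ℝ 1 (deriv f) s).differentiableOn
      one_ne_zero).differentiableAt (hs.mem_nhds hx)).hasDerivAt⟩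

/-- For `α > 0` and `R₀ > 0`, with `Y(r) = √3 e^{-√α r}/r`: every positive radial
supersolution `u` of `-u'' - (2/r) u' + α u ≥ 0` on `(R₀,∞)`, continuous on `[R₀,∞)` and
`C²` on `(R₀,∞)`, dominates the normalized barrier: `u(r) ≥ (u(R₀)/Y(R₀)) Y(r)` on
`[R₀,∞)`. -/
theorem statement15 (α R₀ : ℝ) (hα : 0 < α) (hR₀ : 0 < R₀)
    (u : ℝ → ℝ) (hc : ContinuousOn u (Ici R₀)) (hu : ContDiffOn ℝ 2 u (Ioi R₀))
    (hpos : ∀ r : ℝ, R₀ ≤ r → 0 < u r)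
    (hsuper : ∀ r : ℝ, R₀ < r →
      0 ≤ -deriv (deriv u) r - (2 / r) * deriv u r + α * u r) :
    ∀ r : ℝ, R₀ ≤ r →
      (u R₀ / (Real.sqrt 3 * Real.exp (-Real.sqrt α * R₀) / R₀)) *
        (Real.sqrt 3 * Real.exp (-Real.sqrt α * r) / r) ≤ u r := by
  intro r hr
  have hderiv x (hx : x ∈ Ioi R₀) :=
    hasDerivAt_deriv_deriv_of_contDiffOn isOpen_Ioi hu hx
  have hradial :
      ∀ x ∈ Ioi R₀, 2 * deriv u x + x * deriv (deriv u) x ≤ √α ^ 2 * (x * u x) :=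
    fun x hx => by
      have hx₀ : 0 < x := hR₀.trans hx
      have := mul_nonneg hx₀.le (hsuper x hx)
      rw [sq_sqrt hα.le]
      field_simp at this
      linarith
  have hmono : MonotoneOn (fun x => x * u x * exp (√α * x)) (Ici R₀) :=
    monotoneOn_mul_exp_of_pos_of_deriv2_le (sqrt_nonneg α)
      (fun x hx => ((hasDerivAt_id x).mul (hderiv x hx).1).congr_deriv (by simp))
      (fun x hx => ((hderiv x hx).1.add ((hasDerivAt_id x).mul (hderiv x hx).2)).congr_deriv
        (by simp; ring))
      (continuousOn_id.mul hc) (fun x hx => mul_pos (hR₀.trans hx) (hpos x hx.le)) hradial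
  have hR₀r := hmono self_mem_Ici hr hr
  have hr₀ : 0 < r := hR₀.trans_le hr
  simp only [neg_mul, exp_neg]
  calc _ = R₀ * u R₀ * exp (√α * R₀) / (r * exp (√α * r)) := by field_simp
    _ ≤ u r := by
      rw [div_le_iff₀ (by positivity)]
      linarith
end

section
/- Let 1 < p < 3, α > 0, β ≥ 0 and 0 < ε < 1. Let u : (0,∞) → ℝ be twice continuously differentiable with u(r) > 0 and u′(r) < 0 for all r > 0, u(r) → 0 as r → ∞, and u″(r) + (2/r)·u′(r) = α·u(r) − β·u(r)^p − u(r)^5 for all r > 0. Let R > 0 satisfy (β/α)·u(R)^{p−1} + (1/α)·u(R)⁴ ≤ ε. Then, with Ỹ(r) := e^{−√((1−ε)α)·r}/r, one has u(r) ≤ (u(R)/Ỹ(R))·Ỹ(r) for all r ≥ R. -/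
/-!
With `w(r) = r u(r)` the radial equation becomes `w'' = w (α - β u^{p-1} - u⁴)`. Since `u` is
decreasing, the smallness condition at `R` persists on `[R, ∞)`, so `w'' ≥ k² w` there with
`k² = (1 - ε) α`. The difference `h = w - C e^{-kr}` from the barrier `C e^{-kr}` matching `w` at
`R` then satisfies `h'' ≥ k² h`, vanishes at `R` and grows sublinearly (because `u → 0`). Such a
function cannot be positive anywhere: after subtracting a small linear function `δ (r - R)`, a
positive maximum on a long interval `[R, T]` would be an interior maximum of a strictly convex
function.
-/

open Filter Set Topology

-- No differentiability hypothesis is needed: `0 < deriv^[2] g x` forces it, the junk value being 0.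
theorem nonpos_on_Icc_of_deriv2_pos {g : ℝ → ℝ} {a b : ℝ} (hg : ContinuousOn g (Icc a b))
    (hg'' : ∀ x ∈ Ioo a b, 0 < g x → 0 < deriv^[2] g x) (ha : g a ≤ 0) (hb : g b ≤ 0) :
    ∀ x ∈ Icc a b, g x ≤ 0 := by
  by_contra! ⟨x, hx, hgx⟩
  obtain ⟨s, hs, hmax⟩ := isCompact_Icc.exists_isMaxOn ⟨x, hx⟩ hg
  have hgs : 0 < g s := hgx.trans_le (hmax hx)
  have hs' : s ∈ Ioo a b :=
    ⟨hs.1.lt_of_ne (by rintro rfl; linarith), hs.2.lt_of_ne (by rintro rfl; linarith)⟩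
  have hnear : ∀ᶠ y in 𝓝 s, y ∈ Ioo a b ∧ 0 < g y :=
    Eventually.and (Ioo_mem_nhds hs'.1 hs'.2) <|
      (hg.continuousAt (Icc_mem_nhds hs'.1 hs'.2)).eventually (lt_mem_nhds hgs)
  obtain ⟨δ, hδ, hball⟩ := Metric.eventually_nhds_iff_ball.mp hnear
  set I := Icc (s - δ / 2) (s + δ / 2)
  have hI : ∀ y ∈ I, y ∈ Ioo a b ∧ 0 < g y := by
    intro y hy
    refine hball y ?_
    rw [Metric.mem_ball, Real.dist_eq, abs_lt]
    constructor <;> linarith [hy.1, hy.2]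
  have hconv : StrictConvexOn ℝ I g := by
    refine strictConvexOn_of_deriv2_pos (convex_Icc _ _)
      (hg.mono fun y hy => Ioo_subset_Icc_self (hI y hy).1) fun y hy => ?_
    rw [interior_Icc] at hy
    exact hg'' y (hI y (Ioo_subset_Icc_self hy)).1 (hI y (Ioo_subset_Icc_self hy)).2
  have hlt : g s < max (g (s - δ / 2)) (g (s + δ / 2)) :=
    hconv.lt_on_openSegment ⟨le_rfl, by linarith⟩ ⟨by linarith, le_rfl⟩ (by linarith)
      (by rw [openSegment_eq_Ioo (by linarith)]; constructor <;> linarith)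
  have hle : ∀ y ∈ I, g y ≤ g s := fun y hy => hmax (Ioo_subset_Icc_self (hI y hy).1)
  have := max_le (hle _ ⟨le_rfl, by linarith⟩) (hle _ ⟨by linarith, le_rfl⟩)
  linarith

theorem deriv2_sub_mul_sub {h : ℝ → ℝ} {x : ℝ} {s : Set ℝ} (hs : IsOpen s) (hx : x ∈ s)
    (hh : DifferentiableOn ℝ h s) (c a : ℝ) :
    deriv^[2] (fun y => h y - c * (y - a)) x = deriv^[2] h x := by
  have hderiv : deriv (fun y => h y - c * (y - a)) =ᶠ[𝓝 x] fun y => deriv h y - c := by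
    filter_upwards [hs.mem_nhds hx] with y hy
    have : HasDerivAt (fun y => h y - c * (y - a)) (deriv h y - c * 1) y :=
      ((hh y hy).differentiableAt (hs.mem_nhds hy)).hasDerivAt.sub
        (((hasDerivAt_id y).sub_const a).const_mul c)
    rw [this.deriv, mul_one]
  simp only [Function.iterate_succ, Function.iterate_zero, Function.comp_apply, Function.id_comp]
  rw [hderiv.deriv_eq, deriv_sub_const]

theorem nonpos_on_Ici_of_deriv2_pos_of_sublinear {h : ℝ → ℝ} {a : ℝ}
    (hcont : ContinuousOn h (Ici a)) (hdiff : DifferentiableOn ℝ h (Ioi a))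
    (hh'' : ∀ x ∈ Ioi a, 0 < h x → 0 < deriv^[2] h x) (ha : h a ≤ 0)
    (hsub : ∀ δ > 0, ∀ᶠ x in atTop, h x ≤ δ * x) :
    ∀ x ∈ Ici a, h x ≤ 0 := by
  intro x hx
  have hlin : ∀ δ > 0, h x ≤ δ * (x - a) := by
    intro δ hδ
    obtain ⟨T, hT, hTx, hTa⟩ := ((hsub (δ / 2) (by positivity)).and
      ((eventually_ge_atTop x).and (eventually_ge_atTop (2 * a)))).exists
    have hT_le := nonpos_on_Icc_of_deriv2_pos (g := fun y => h y - δ * (y - a)) (b := T)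
      ((hcont.mono Icc_subset_Ici_self).sub (by fun_prop))
      (fun y hy hgy => by
        rw [deriv2_sub_mul_sub isOpen_Ioi hy.1 hdiff]
        exact hh'' y hy.1 (by nlinarith [hy.1]))
      (by simpa using ha) (by nlinarith) x ⟨hx, hTx⟩
    linarith
  refine ge_of_tendsto (f := fun δ : ℝ => δ * (x - a)) (x := 𝓝[>] 0) ?_ ?_
  · exact ((continuous_mul_const (x - a)).tendsto' 0 0 (zero_mul _)).mono_left
      nhdsWithin_le_nhds
  · filter_upwards [self_mem_nhdsWithin] with δ hδ using hlin δ hδ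

theorem deriv2_eq_of_hasDerivAt {f f' : ℝ → ℝ} {f'' x : ℝ} {s : Set ℝ} (hs : s ∈ 𝓝 x)
    (hf : ∀ y ∈ s, HasDerivAt f (f' y) y) (hf' : HasDerivAt f' f'' x) :
    deriv^[2] f x = f'' := by
  have hderiv : deriv f =ᶠ[𝓝 x] f' := by
    filter_upwards [hs] with y hy using (hf y hy).deriv
  simp only [Function.iterate_succ, Function.iterate_zero, Function.comp_apply, Function.id_comp]
  rw [hderiv.deriv_eq, hf'.deriv]

theorem le_yukawa_of_radial_subsolution {u : ℝ → ℝ} {k R : ℝ} (hk : k ≠ 0) (hR : 0 < R)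
    (huR : 0 ≤ u R) (hcont : ContinuousOn u (Ici R)) (hdiff : DifferentiableOn ℝ u (Ioi R))
    (hdiff' : DifferentiableOn ℝ (deriv u) (Ioi R))
    (hsub : ∀ x ∈ Ioi R, k ^ 2 * u x ≤ deriv (deriv u) x + 2 / x * deriv u x)
    (hlim : Tendsto u atTop (𝓝 0)) :
    ∀ r, R ≤ r → u r ≤ u R / (Real.exp (-k * R) / R) * (Real.exp (-k * r) / r) := by
  set C := u R / (Real.exp (-k * R) / R)
  have hC : 0 ≤ C := by positivity
  set w : ℝ → ℝ := fun x => x * u x - C * Real.exp (-k * x)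
  set w' : ℝ → ℝ := fun x => u x + x * deriv u x + k * C * Real.exp (-k * x)
  have hw' : ∀ x ∈ Ioi R, HasDerivAt w (w' x) x := by
    intro x hx
    have hu := (hdiff x hx).differentiableAt (isOpen_Ioi.mem_nhds hx)
    refine (((hasDerivAt_id' x).mul hu.hasDerivAt).sub
      (((hasDerivAt_id' x).const_mul (-k)).exp.const_mul C)).congr_deriv ?_
    ring
  have hw'' : ∀ x ∈ Ioi R, HasDerivAt w'
      (x * (deriv (deriv u) x + 2 / x * deriv u x) - k ^ 2 * C * Real.exp (-k * x)) x := by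
    intro x hx
    have hu := (hdiff x hx).differentiableAt (isOpen_Ioi.mem_nhds hx)
    have hu' := (hdiff' x hx).differentiableAt (isOpen_Ioi.mem_nhds hx)
    refine ((hu.hasDerivAt.add ((hasDerivAt_id' x).mul hu'.hasDerivAt)).add
      (((hasDerivAt_id' x).const_mul (-k)).exp.const_mul (k * C))).congr_deriv ?_
    have : x ≠ 0 := (hR.trans hx).ne'
    field_simp
    ring
  have hwR : w R = 0 := by
    simp only [w, C]
    field_simp
    ring
  have hw_nonpos := nonpos_on_Ici_of_deriv2_pos_of_sublinear (h := w)
    ((continuousOn_id.mul hcont).sub (by fun_prop))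
    (fun x hx => (hw' x hx).differentiableAt.differentiableWithinAt)
    (fun x hx hwx => by
      rw [deriv2_eq_of_hasDerivAt (isOpen_Ioi.mem_nhds hx) hw' (hw'' x hx)]
      have := mul_le_mul_of_nonneg_left (hsub x hx) (hR.trans hx).le
      nlinarith [mul_pos ((sq_pos_of_ne_zero hk)) hwx])
    hwR.le
    (fun δ hδ => by
      filter_upwards [hlim.eventually_lt_const hδ, eventually_ge_atTop 0] with x hux hx
      have : 0 ≤ C * Real.exp (-k * x) := by positivity
      simp only [w]
      nlinarith)
  intro r hr
  have := hw_nonpos r hr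
  rw [← mul_div_assoc, le_div_iff₀ (hR.trans_le hr)]
  simp only [w] at this
  linarith

theorem rpow_add_pow_five_le_of_le {α β ε p s t : ℝ} (hα : 0 < α) (hβ : 0 ≤ β) (hp : 1 ≤ p)
    (hs : 0 ≤ s) (hst : s ≤ t) (ht : (β / α) * t ^ (p - 1) + (1 / α) * t ^ 4 ≤ ε) :
    β * s ^ p + s ^ 5 ≤ ε * α * s := by
  have hsp : s ^ p = s ^ (p - 1) * s := by
    rw [← Real.rpow_add_one' hs (by linarith), sub_add_cancel]
  have ht' : β * t ^ (p - 1) + t ^ 4 ≤ ε * α := by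
    rw [div_mul_eq_mul_div, one_div_mul_eq_div, ← add_div, div_le_iff₀ hα] at ht
    exact ht
  have hmono : β * s ^ (p - 1) + s ^ 4 ≤ β * t ^ (p - 1) + t ^ 4 := by
    gcongr
  rw [hsp]
  nlinarith

theorem statement16_general (p α β ε : ℝ) (hp1 : 1 < p)
    (hα : 0 < α) (hβ : 0 ≤ β) (hε1 : ε < 1)
    (u : ℝ → ℝ) (hu : ContDiffOn ℝ 2 u (Ioi 0))
    (hpos : ∀ r : ℝ, 0 < r → 0 < u r) (hdec : ∀ r : ℝ, 0 < r → deriv u r < 0)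
    (hlim : Tendsto u atTop (nhds 0))
    (hode : ∀ r : ℝ, 0 < r →
      deriv (deriv u) r + (2 / r) * deriv u r = α * u r - β * u r ^ p - u r ^ 5)
    (R : ℝ) (hR : 0 < R)
    (hRcond : (β / α) * u R ^ (p - 1) + (1 / α) * u R ^ 4 ≤ ε) :
    ∀ r : ℝ, R ≤ r →
      u r ≤ (u R / (Real.exp (-Real.sqrt ((1 - ε) * α) * R) / R)) *
        (Real.exp (-Real.sqrt ((1 - ε) * α) * r) / r) := by
  have hk : 0 < (1 - ε) * α := mul_pos (by linarith) hα
  have hdiff : DifferentiableOn ℝ u (Ioi 0) := hu.differentiableOn two_ne_zero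
  have hdiff' : DifferentiableOn ℝ (deriv u) (Ioi 0) :=
    (hu.deriv_of_isOpen isOpen_Ioi (m := 1) (by norm_num)).differentiableOn one_ne_zero
  have hanti : AntitoneOn u (Ioi 0) :=
    antitoneOn_of_deriv_nonpos (convex_Ioi 0) hdiff.continuousOn (by rwa [interior_Ioi])
      fun x hx => (hdec x (by rwa [interior_Ioi] at hx)).le
  refine le_yukawa_of_radial_subsolution (Real.sqrt_pos.2 hk).ne' hR (hpos R hR).le
    (hdiff.continuousOn.mono (Ici_subset_Ioi.2 hR)) (hdiff.mono (Ioi_subset_Ioi hR.le))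
    (hdiff'.mono (Ioi_subset_Ioi hR.le)) (fun x hx => ?_) hlim
  have hx0 : 0 < x := hR.trans hx
  have := rpow_add_pow_five_le_of_le hα hβ hp1.le (hpos x hx0).le
    (hanti (mem_Ioi.2 hR) hx0 (le_of_lt hx)) hRcond
  rw [Real.sq_sqrt hk.le, hode x hx0]
  linarith

/-- For `1 < p < 3`, `α > 0`, `β ≥ 0`, `0 < ε < 1`: let `u` be a positive decreasing `C²`
solution on `(0,∞)` of `u'' + (2/r) u' = α u - β u^p - u^5` with `u(r) → 0`, and let `R > 0`
satisfy `(β/α) u(R)^{p-1} + (1/α) u(R)⁴ ≤ ε`. Then, with `Ỹ(r) = e^{-√((1-ε)α) r}/r`, one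
has the upper barrier bound `u(r) ≤ (u(R)/Ỹ(R)) Ỹ(r)` for `r ≥ R`. -/
theorem statement16 (p α β ε : ℝ) (hp1 : 1 < p) (hp3 : p < 3)
    (hα : 0 < α) (hβ : 0 ≤ β) (hε0 : 0 < ε) (hε1 : ε < 1)
    (u : ℝ → ℝ) (hu : ContDiffOn ℝ 2 u (Ioi 0))
    (hpos : ∀ r : ℝ, 0 < r → 0 < u r) (hdec : ∀ r : ℝ, 0 < r → deriv u r < 0)
    (hlim : Tendsto u atTop (nhds 0))
    (hode : ∀ r : ℝ, 0 < r →
      deriv (deriv u) r + (2 / r) * deriv u r = α * u r - β * u r ^ p - u r ^ 5)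
    (R : ℝ) (hR : 0 < R)
    (hRcond : (β / α) * u R ^ (p - 1) + (1 / α) * u R ^ 4 ≤ ε) :
    ∀ r : ℝ, R ≤ r →
      u r ≤ (u R / (Real.exp (-Real.sqrt ((1 - ε) * α) * R) / R)) *
        (Real.exp (-Real.sqrt ((1 - ε) * α) * r) / r) :=
  statement16_general p α β ε hp1 hα hβ hε1 u hu hpos hdec hlim hode R hR hRcond
end
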